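/- arXiv:1610.03970 — 6 statements merged into one kernel-verified Lean document; each statement's English description precedes it below -/
import Mathlib

section
/- Let H* = F₂[y₁,…,y_N] ⊗ Δ(x₁,…,x_N) be the free loop space cohomology of a space X with H*(X;F₂) polynomial, and let Dlcop be a product on H* satisfying: (i) Dlcop(a ⊗ x_i b) = x_i·Dlcop(a⊗b) + Dlcop(a x_i ⊗ b); (ii) Dlcop(Px_{i₁}⋯x_{i_l} ⊗ 1) = 0 if {i₁,…,i_l} ⊊ {1,…,N} and Dlcop(P x₁⋯x_N ⊗ 1) = P; (iii) Dlcop is F₂[y]⊗F₂[y]-bilinear; and Dlcop is commutative. Then for any subsets I, J ⊆ {1,…,N}: Dlcop(x_I ⊗ x_J) = Dlcop(x₁⋯x_N ⊗ x_{I∩J}) if I ∪ J = {1,…,N}, and Dlcop(x_I ⊗ x_J) = 0 otherwise. -/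
/-!
Write `x_I = ∏ i ∈ I, x i` and let `V m` be the span, over the coefficient ring, of the `x_I`
with `|I| ≤ m`. Since each `x i ^ 2` is a linear combination of the `x j`, multiplication by
`x i` raises this filtration by at most one, so `x_L * x_U ∈ V |U|` whenever `L ⊆ U`, and by (ii)
`D (·) 1` vanishes on `V m` for `m < N`. Iterating the Leibniz rule (i) gives
`D a (x_J * b) = ∑_{K ⊆ J} x_{J \ K} * D (a * x_K) b`. For `a = x_I`, `b = 1` every term has
`x_I * x_K ∈ V |I ∪ K|`, which kills it unless `I ∪ K` is everything. If `I ∪ J` is everything,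
expand instead along `J \ I = Iᶜ` with `b = x_{I ∩ J}`: only `K = Iᶜ` survives, and it
contributes `D (x_I * x_{Iᶜ}) x_{I ∩ J}`.
-/

open Finset Submodule

section MonomialSpan

variable {R H σ : Type*} [CommSemiring R] [CommRing H] [Algebra R H]
  (S : Subalgebra R H) (x : σ → H)

def monomialSpan (m : ℕ) : Submodule S H :=
  span S ((fun I : Finset σ => ∏ i ∈ I, x i) '' {I | I.card ≤ m})

variable {S x}

theorem monomialSpan_mono : Monotone (monomialSpan S x) := fun _ _ hmn =>
  span_mono <| Set.image_mono fun _ hI => le_trans (Set.mem_ofPred.mp hI) hmn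

theorem prod_mem_monomialSpan {I : Finset σ} {m : ℕ} (hI : I.card ≤ m) :
    ∏ i ∈ I, x i ∈ monomialSpan S x m :=
  subset_span ⟨I, hI, rfl⟩

theorem mul_mem_of_mem_span {s : Set H} {W : Submodule S H} {a c : H} (hc : c ∈ span S s)
    (h : ∀ b ∈ s, b * a ∈ W) : c * a ∈ W :=
  (span_le (p := W.comap (LinearMap.mulRight S a))).mpr h hc

variable [DecidableEq σ] (hsq : ∀ i, x i * x i ∈ span S (Set.range x))
include hsq

theorem mul_prod_mem_monomialSpan (I : Finset σ) (i : σ) :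
    x i * ∏ k ∈ I, x k ∈ monomialSpan S x (I.card + 1) := by
  induction I using Finset.strongInduction generalizing i with
  | H I ih =>
    by_cases hi : i ∈ I
    · rw [← mul_prod_erase I x hi, ← mul_assoc, ← card_erase_add_one hi]
      refine monomialSpan_mono (Nat.le_succ _) (mul_mem_of_mem_span (hsq i) ?_)
      rintro _ ⟨j, rfl⟩
      exact ih _ (erase_ssubset hi) j
    · rw [← prod_insert hi]
      exact prod_mem_monomialSpan (card_insert_le i I)

theorem mul_mem_monomialSpan_succ {a : H} {m : ℕ} (ha : a ∈ monomialSpan S x m) (i : σ) :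
    x i * a ∈ monomialSpan S x (m + 1) := by
  rw [mul_comm]
  refine mul_mem_of_mem_span ha ?_
  rintro _ ⟨I, hI, rfl⟩
  rw [mul_comm]
  exact monomialSpan_mono (Nat.succ_le_succ hI) (mul_prod_mem_monomialSpan hsq I i)

theorem mul_self_mul_mem_monomialSpan_succ {a : H} {m : ℕ} (ha : a ∈ monomialSpan S x m)
    (i : σ) : x i * x i * a ∈ monomialSpan S x (m + 1) := by
  refine mul_mem_of_mem_span (hsq i) ?_
  rintro _ ⟨j, rfl⟩
  exact mul_mem_monomialSpan_succ hsq ha j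

theorem prod_mul_prod_mem_monomialSpan_of_subset {L U : Finset σ} (hLU : L ⊆ U) :
    (∏ i ∈ L, x i) * ∏ i ∈ U, x i ∈ monomialSpan S x U.card := by
  induction L using Finset.induction_on generalizing U with
  | empty => simpa using prod_mem_monomialSpan le_rfl
  | insert l L hl ih =>
    have hlU : l ∈ U := hLU (mem_insert_self l L)
    have hLU' : L ⊆ U.erase l := fun i hi =>
      mem_erase.mpr ⟨fun h => hl (h ▸ hi), hLU (mem_insert_of_mem hi)⟩
    rw [prod_insert hl, ← mul_prod_erase U x hlU, ← card_erase_add_one hlU,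
      mul_mul_mul_comm]
    exact mul_self_mul_mem_monomialSpan_succ hsq (ih hLU') l

theorem prod_mul_prod_mem_monomialSpan (I K : Finset σ) :
    (∏ i ∈ I, x i) * ∏ i ∈ K, x i ∈ monomialSpan S x (I ∪ K).card := by
  rw [← prod_union_inter, mul_comm]
  exact prod_mul_prod_mem_monomialSpan_of_subset hsq inter_subset_union

end MonomialSpan

section Leibniz

variable {H σ : Type*} [CommRing H] [DecidableEq σ] {x : σ → H} {D : H → H → H}

theorem apply_prod_mul_eq_sum_powerset
    (hrel : ∀ (a b : H) (i : σ), D a (x i * b) = x i * D a b + D (a * x i) b)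
    (J : Finset σ) (a b : H) :
    D a ((∏ j ∈ J, x j) * b)
      = ∑ K ∈ J.powerset, (∏ j ∈ J \ K, x j) * D (a * ∏ k ∈ K, x k) b := by
  induction J using Finset.induction_on generalizing a with
  | empty => simp
  | insert j J hj ih =>
    rw [prod_insert hj, mul_assoc, hrel, ih, ih, sum_powerset_insert hj, mul_sum]
    congr 1
    · refine sum_congr rfl fun K hK => ?_
      have hjK : j ∉ K := fun h => hj (mem_powerset.mp hK h)
      rw [insert_sdiff_of_notMem _ hjK, prod_insert (fun h => hj (mem_sdiff.mp h).1), mul_assoc]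
    · refine sum_congr rfl fun K hK => ?_
      have hjK : j ∉ K := fun h => hj (mem_powerset.mp hK h)
      rw [insert_sdiff_insert, sdiff_insert_of_notMem hj, prod_insert hjK, mul_assoc a]

end Leibniz

section Dlcop

variable {R H σ : Type*} [CommSemiring R] [CommRing H] [Algebra R H] [Fintype σ]
  {S : Subalgebra R H} {x : σ → H} {D : H → H → H}

theorem apply_one_eq_zero_of_mem_monomialSpan
    (haddl : ∀ a b c : H, D (a + b) c = D a c + D b c)
    (hvanish : ∀ r ∈ S, ∀ I : Finset σ, I ≠ univ → D (r * ∏ i ∈ I, x i) 1 = 0)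
    {a : H} {m : ℕ} (hm : m < Fintype.card σ) (ha : a ∈ monomialSpan S x m) : D a 1 = 0 := by
  -- `D · 1` is only additive, not `S`-linear, so the induction carries a coefficient along.
  let D₁ : H →+ H := AddMonoidHom.mk' (D · 1) fun a b => haddl a b 1
  suffices ∀ r ∈ S, D₁ (r * a) = 0 by simpa [D₁] using this 1 S.one_mem
  induction ha using span_induction with
  | mem _ h =>
    obtain ⟨I, hI, rfl⟩ := h
    refine fun r hr => hvanish r hr I fun hIu => ?_
    rw [Set.mem_ofPred, hIu, card_univ] at hI
    omega
  | zero => simp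
  | add a b _ _ ha hb => exact fun r hr => by rw [mul_add, map_add, ha r hr, hb r hr, add_zero]
  | smul s a _ ha =>
    intro r hr
    rw [Subalgebra.smul_def, smul_eq_mul, ← mul_assoc]
    exact ha _ (S.mul_mem hr s.2)

variable [DecidableEq σ] (haddl : ∀ a b c : H, D (a + b) c = D a c + D b c)
  (hsq : ∀ i, x i * x i ∈ span S (Set.range x))
  (hrel : ∀ (a b : H) (i : σ), D a (x i * b) = x i * D a b + D (a * x i) b)
  (hvanish : ∀ r ∈ S, ∀ I : Finset σ, I ≠ univ → D (r * ∏ i ∈ I, x i) 1 = 0)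
include haddl hsq hrel hvanish

theorem apply_prod_prod_eq_zero {I J : Finset σ} (hIJ : I ∪ J ≠ univ) :
    D (∏ i ∈ I, x i) (∏ j ∈ J, x j) = 0 := by
  rw [← mul_one (∏ j ∈ J, x j), apply_prod_mul_eq_sum_powerset hrel]
  refine sum_eq_zero fun K hK => ?_
  have hIK : I ∪ K ⊂ univ :=
    ssubset_univ_iff.mpr fun h =>
      hIJ (univ_subset_iff.mp (h ▸ union_subset_union_right (mem_powerset.mp hK)))
  rw [apply_one_eq_zero_of_mem_monomialSpan (S := S) haddl hvanish
    (card_univ (α := σ) ▸ card_lt_card hIK) (prod_mul_prod_mem_monomialSpan hsq I K), mul_zero]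

theorem apply_prod_prod_of_union_eq_univ {I J : Finset σ} (hIJ : I ∪ J = univ) :
    D (∏ i ∈ I, x i) (∏ j ∈ J, x j) = D (∏ i, x i) (∏ k ∈ I ∩ J, x k) := by
  have hJ : J = Iᶜ ∪ I ∩ J := by
    rw [compl_eq_univ_sdiff, ← hIJ, union_sdiff_left, inter_comm I J, sdiff_union_inter]
  conv_lhs => rw [hJ, prod_union (disjoint_compl_left.mono_right inter_subset_left)]
  rw [apply_prod_mul_eq_sum_powerset hrel, sum_eq_single_of_mem Iᶜ (mem_powerset_self _),
    Finset.sdiff_self, prod_empty, one_mul, prod_mul_prod_compl]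
  intro K hK hKI
  have hKIc : K ⊆ Iᶜ := mem_powerset.mp hK
  have hIK : I ∪ K ∪ I ∩ J ≠ univ := by
    rw [union_eq_left.mpr (inter_subset_left.trans subset_union_left)]
    intro hu
    exact hKI (subset_antisymm hKIc fun i hi =>
      (mem_union.mp (hu ▸ mem_univ i)).resolve_left (mem_compl.mp hi))
  rw [← prod_union (disjoint_compl_right.mono_right hKIc),
    apply_prod_prod_eq_zero haddl hsq hrel hvanish hIK, mul_zero]

end Dlcop

theorem stmt10_general {H : Type*} [CommRing H] [Algebra (ZMod 2) H] {N : ℕ}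
    (x y : Fin N → H) (D : H → H → H)
    (haddl : ∀ a b c : H, D (a + b) c = D a c + D b c)
    (hsq : ∀ i : Fin N, ∃ P : Fin N → MvPolynomial (Fin N) (ZMod 2),
      x i * x i = ∑ j, x j * MvPolynomial.aeval y (P j))
    (hrel : ∀ (a b : H) (i : Fin N), D a (x i * b) = x i * D a b + D (a * x i) b)
    (hvanish : ∀ (P : MvPolynomial (Fin N) (ZMod 2)) (I : Finset (Fin N)),
      I ≠ Finset.univ → D (MvPolynomial.aeval y P * ∏ i ∈ I, x i) 1 = 0) :
    ∀ I J : Finset (Fin N),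
      (I ∪ J = Finset.univ →
        D (∏ i ∈ I, x i) (∏ j ∈ J, x j) = D (∏ i, x i) (∏ k ∈ I ∩ J, x k)) ∧
      (I ∪ J ≠ Finset.univ → D (∏ i ∈ I, x i) (∏ j ∈ J, x j) = 0) := by
  set S := (MvPolynomial.aeval (R := ZMod 2) y).range
  have hsq' : ∀ i, x i * x i ∈ span S (Set.range x) := fun i => by
    obtain ⟨P, hP⟩ := hsq i
    rw [hP]
    refine sum_mem fun j _ => ?_
    rw [mul_comm]
    exact smul_mem _ (⟨_, P j, rfl⟩ : S) (subset_span ⟨j, rfl⟩)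
  have hvanish' : ∀ r ∈ S, ∀ I : Finset (Fin N), I ≠ univ → D (r * ∏ i ∈ I, x i) 1 = 0 := by
    rintro _ ⟨P, rfl⟩ I hI
    exact hvanish P I hI
  exact fun I J => ⟨apply_prod_prod_of_union_eq_univ haddl hsq' hrel hvanish',
    apply_prod_prod_eq_zero haddl hsq' hrel hvanish'⟩

/-- Let `H^* = F₂[y₁,…,y_N] ⊗ Δ(x₁,…,x_N)` be the free loop space
cohomology of a space `X` with `H^*(X;F₂)` polynomial: we model it as a commutative
`F₂`-algebra `H` containing elements `x i` and `y i`, in which squares of the `x i` are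
polynomial combinations `x i² = ∑ⱼ x j · P j(y)` (coming from Steenrod operations), and
whose products `P(y)·x_I` make sense via `aeval y`.  Let `Dlcop = D` be a commutative,
(bi)additive product satisfying:
(i)  `D a (x i · b) = x i · D a b + D (a · x i) b`;
(ii) `D (P(y)·x_I) 1 = 0` for `I ⊊ {1,…,N}` and `D (P(y)·x₁⋯x_N) 1 = P(y)`;
(iii) `D` is `F₂[y] ⊗ F₂[y]`-bilinear.
Then for all subsets `I, J ⊆ {1,…,N}`:
`D x_I x_J = D (x₁⋯x_N) x_{I∩J}` if `I ∪ J = {1,…,N}`, and `D x_I x_J = 0` otherwise. -/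
theorem stmt10 {H : Type*} [CommRing H] [Algebra (ZMod 2) H] {N : ℕ}
    (x y : Fin N → H) (D : H → H → H)
    (haddl : ∀ a b c : H, D (a + b) c = D a c + D b c)
    (haddr : ∀ a b c : H, D a (b + c) = D a b + D a c)
    (hsq : ∀ i : Fin N, ∃ P : Fin N → MvPolynomial (Fin N) (ZMod 2),
      x i * x i = ∑ j, x j * MvPolynomial.aeval y (P j))
    (hrel : ∀ (a b : H) (i : Fin N), D a (x i * b) = x i * D a b + D (a * x i) b)
    (hvanish : ∀ (P : MvPolynomial (Fin N) (ZMod 2)) (I : Finset (Fin N)),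
      I ≠ Finset.univ → D (MvPolynomial.aeval y P * ∏ i ∈ I, x i) 1 = 0)
    (hfull : ∀ P : MvPolynomial (Fin N) (ZMod 2),
      D (MvPolynomial.aeval y P * ∏ i, x i) 1 = MvPolynomial.aeval y P)
    (hbilin : ∀ (P Q : MvPolynomial (Fin N) (ZMod 2)) (a b : H),
      D (MvPolynomial.aeval y P * a) (MvPolynomial.aeval y Q * b)
        = MvPolynomial.aeval y P * MvPolynomial.aeval y Q * D a b)
    (hcomm : ∀ a b : H, D a b = D b a) :
    ∀ I J : Finset (Fin N),
      (I ∪ J = Finset.univ →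
        D (∏ i ∈ I, x i) (∏ j ∈ J, x j) = D (∏ i, x i) (∏ k ∈ I ∩ J, x k)) ∧
      (I ∪ J ≠ Finset.univ → D (∏ i ∈ I, x i) (∏ j ∈ J, x j) = 0) :=
  stmt10_general x y D haddl hsq hrel hvanish
end

section
/- In the setting of the mod 2 dual loop coproduct on H*(LX;F₂) = F₂[y₁,…,y_N] ⊗ Δ(x₁,…,x_N) with X simply-connected and H*(X;F₂) polynomial: the element Dlcop(x₁⋯x_N ⊗ x₁⋯x_N) is a two-sided unit for the product Dlcop on H^{*+d}(LX;F₂). -/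
open Finset

/-- In the setting of the mod 2 dual loop coproduct on
`H^*(LX;F₂) = F₂[y₁,…,y_N] ⊗ Δ(x₁,…,x_N)` (`X` simply connected, `H^*(X;F₂)` polynomial),
modelled as a commutative `F₂`-algebra `H` spanned over `F₂` by the elements
`P(y)·x_I`: the element `Dlcop(x₁⋯x_N ⊗ x₁⋯x_N)` is a two-sided unit for the (graded
commutative, associative, `F₂[y]`-bilinear) product `Dlcop = D` satisfying
`D a (x i · b) = x i · D a b + D (a·x i) b`, `D (x₁⋯x_N) 1 = 1`, and
`D (P(y)·x_I) 1 = 0` for proper subsets `I ⊊ {1,…,N}`. -/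
theorem stmt11 {H : Type*} [CommRing H] [Algebra (ZMod 2) H] {N : ℕ}
    (x y : Fin N → H) (D : H → H → H)
    (haddl : ∀ a b c : H, D (a + b) c = D a c + D b c)
    (haddr : ∀ a b c : H, D a (b + c) = D a b + D a c)
    (hrel : ∀ (a b : H) (i : Fin N), D a (x i * b) = x i * D a b + D (a * x i) b)
    (hvanish : ∀ (P : MvPolynomial (Fin N) (ZMod 2)) (I : Finset (Fin N)),
      I ≠ Finset.univ → D (MvPolynomial.aeval y P * ∏ i ∈ I, x i) 1 = 0)
    (hbilin : ∀ (P Q : MvPolynomial (Fin N) (ZMod 2)) (a b : H),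
      D (MvPolynomial.aeval y P * a) (MvPolynomial.aeval y Q * b)
        = MvPolynomial.aeval y P * MvPolynomial.aeval y Q * D a b)
    (hcomm : ∀ a b : H, D a b = D b a)
    (hassoc : ∀ a b c : H, D (D a b) c = D a (D b c))
    (hunit1 : D (∏ i, x i) 1 = 1)
    -- `H^* = F₂[y₁,…,y_N] ⊗ Δ(x₁,…,x_N)`: the products `P(y)·x_I` span `H`
    (hspan : Submodule.span (ZMod 2)
        {h : H | ∃ (P : MvPolynomial (Fin N) (ZMod 2)) (I : Finset (Fin N)),
          h = MvPolynomial.aeval y P * ∏ i ∈ I, x i} = ⊤) :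
    ∀ b : H, D (D (∏ i, x i) (∏ i, x i)) b = b ∧ D b (D (∏ i, x i) (∏ i, x i)) = b := by
  intro b
  set p : H := ∏ i, x i with hp
  set e : H := D p p with he
  -- characteristic 2
  have two : ∀ z : H, z + z = 0 := by
    intro z
    rw [← one_smul (ZMod 2) z, ← add_smul]
    have h2 : (1 + 1 : ZMod 2) = 0 := by decide
    rw [h2, zero_smul]
  have D0 : ∀ c : H, D 0 c = 0 := by
    intro c
    have h := haddl 0 0 c
    rw [add_zero] at h
    exact left_eq_add.mp h
  -- x i * e = 0
  have hxe : ∀ i : Fin N, x i * e = 0 := by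
    intro i
    have h := hrel p p i
    rw [hcomm p (x i * p), mul_comm p (x i)] at h
    -- h : D (x i * p) p = x i * e + D (x i * p) p
    have := congrArg (· + D (x i * p) p) h
    rw [two, add_assoc, two, add_zero] at this
    exact this.symm
  have De1 : D e 1 = 1 := by
    rw [he, hassoc, hunit1, hunit1]
  -- D e (∏ i in I, x i) = ∏ i in I, x i
  have DeI : ∀ I : Finset (Fin N), D e (∏ i ∈ I, x i) = ∏ i ∈ I, x i := by
    intro I
    induction I using Finset.induction with
    | empty => simpa using De1
    | @insert a s hni ih =>
      rw [Finset.prod_insert hni, hrel, ih, mul_comm e (x a), hxe, D0, add_zero]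
  have key : ∀ c : H, D e c = c := by
    intro c
    have hc : c ∈ Submodule.span (ZMod 2)
        {h : H | ∃ (P : MvPolynomial (Fin N) (ZMod 2)) (I : Finset (Fin N)),
          h = MvPolynomial.aeval y P * ∏ i ∈ I, x i} := by
      rw [hspan]; trivial
    induction hc using Submodule.span_induction with
    | mem v hv =>
      obtain ⟨P, I, rfl⟩ := hv
      have h := hbilin 1 P e (∏ i ∈ I, x i)
      simp only [map_one, one_mul] at h
      rw [h, DeI]
    | zero =>
      have h := haddr e 0 0
      rw [add_zero] at h
      exact left_eq_add.mp h
    | add u v _ _ hu hv => rw [haddr, hu, hv]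
    | smul c v _ hv =>
      have h01 := (by decide : ∀ c : ZMod 2, c = 0 ∨ c = 1) c
      rcases h01 with rfl | rfl
      · rw [zero_smul]
        have h := haddr e 0 0
        rw [add_zero] at h
        exact left_eq_add.mp h
      · rw [one_smul]; exact hv
  exact ⟨key b, by rw [hcomm]; exact key b⟩
end

section
/- Let A = Λ(u₋₁, u₋₂) ⊗ F₂[v₂, v₃] with the BV operator Δ determined by: Δ(v₂^i v₃^j) = 0, Δ(u₋₁u₋₂ v₂^i v₃^j) = i·u₋₂ v₂^{i-1} v₃^j + j·u₋₁ v₂^i v₃^{j-1}, Δ(u₋₂ v₂^i v₃^j) = i u₋₁ v₂^{i-1} v₃^j + j v₂^i v₃^{j-1} + j u₋₂ v₂^{i+1} v₃^{j-1} + j u₋₁u₋₂ v₂^i v₃^j, and Δ(u₋₁ v₂^i v₃^j) = i v₂^{i-1} v₃^j + (i+j) u₋₂ v₂^i v₃^j + i u₋₁u₋₂ v₂^{i-1} v₃^{j+1} + j u₋₁ v₂^{i+1} v₃^{j-1}. Then the unit 1 does not belong to the image of Δ. -/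
/-! **Statement 13.**  `A = Λ(u₋₁, u₋₂) ⊗ F₂[v₂, v₃]` with the BV operator `Δ` of
`H^{*+3}(LBSO(3); F₂)`.  We model `A` by its monomial basis: the basis element
`u₋₁^{b₁} u₋₂^{b₂} v₂^i v₃^j` is indexed by `(b₁, b₂, i, j) : Bool × Bool × ℕ × ℕ`,
and the unit `1` of the algebra is the basis element indexed by `(false, false, 0, 0)`.
`Δ` is the `F₂`-linear operator defined on this basis by the listed formulas
(coefficients `i, j` taken mod 2; `ℕ`-subtraction `i-1` is harmless since the corresponding
coefficient vanishes when `i = 0`).  The theorem: `1 ∉ Im Δ`. -/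

/-- The underlying `F₂`-vector space of `Λ(u₋₁,u₋₂) ⊗ F₂[v₂,v₃]`, with monomial basis. -/
abbrev Sp13 : Type := (Bool × Bool × ℕ × ℕ) →₀ ZMod 2

/-- The basis monomial `u₋₁^{b₁} u₋₂^{b₂} v₂^i v₃^j`. -/
noncomputable def e13 (b₁ b₂ : Bool) (i j : ℕ) : Sp13 := Finsupp.single (b₁, b₂, i, j) 1

/-- Value of the BV operator `Δ` on the basis monomials:
`Δ(v₂^i v₃^j) = 0`;
`Δ(u₋₁u₋₂ v₂^i v₃^j) = i·u₋₂ v₂^{i-1} v₃^j + j·u₋₁ v₂^i v₃^{j-1}`;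
`Δ(u₋₂ v₂^i v₃^j) = i·u₋₁ v₂^{i-1} v₃^j + j·v₂^i v₃^{j-1} + j·u₋₂ v₂^{i+1} v₃^{j-1}
  + j·u₋₁u₋₂ v₂^i v₃^j`;
`Δ(u₋₁ v₂^i v₃^j) = i·v₂^{i-1} v₃^j + (i+j)·u₋₂ v₂^i v₃^j + i·u₋₁u₋₂ v₂^{i-1} v₃^{j+1}
  + j·u₋₁ v₂^{i+1} v₃^{j-1}`. -/
noncomputable def Δval13 : Bool × Bool × ℕ × ℕ → Sp13
  | (false, false, _, _) => 0
  | (true, true, i, j) =>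
      (i : ZMod 2) • e13 false true (i - 1) j + (j : ZMod 2) • e13 true false i (j - 1)
  | (false, true, i, j) =>
      (i : ZMod 2) • e13 true false (i - 1) j + (j : ZMod 2) • e13 false false i (j - 1)
        + (j : ZMod 2) • e13 false true (i + 1) (j - 1) + (j : ZMod 2) • e13 true true i j
  | (true, false, i, j) =>
      (i : ZMod 2) • e13 false false (i - 1) j + ((i + j : ℕ) : ZMod 2) • e13 false true i j
        + (i : ZMod 2) • e13 true true (i - 1) (j + 1)
        + (j : ZMod 2) • e13 true false (i + 1) (j - 1)

/-- The BV operator `Δ` of `H^{*+3}(LBSO(3);F₂)`, as the `F₂`-linear extension of `Δval13`. -/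
noncomputable def Δ13 : Sp13 →ₗ[ZMod 2] Sp13 :=
  Finsupp.lsum (ZMod 2) fun p => LinearMap.toSpanSingleton (ZMod 2) Sp13 (Δval13 p)

/-- The weight function: indicator of `{1, u₋₁u₋₂v₃}`. -/
def w13 : Bool × Bool × ℕ × ℕ → ZMod 2
  | (false, false, 0, 0) => 1
  | (true, true, 0, 1) => 1
  | _ => 0

/-- The linear functional `φ` given by pairing with `w13`. -/
noncomputable def φ13 : Sp13 →ₗ[ZMod 2] ZMod 2 :=
  Finsupp.lsum (ZMod 2) fun p => LinearMap.toSpanSingleton (ZMod 2) (ZMod 2) (w13 p)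

lemma φ13_e (b₁ b₂ : Bool) (i j : ℕ) : φ13 (e13 b₁ b₂ i j) = w13 (b₁, b₂, i, j) := by
  simp [φ13, e13]

lemma w13_tf (i j : ℕ) : w13 (true, false, i, j) = 0 := rfl
lemma w13_ft (i j : ℕ) : w13 (false, true, i, j) = 0 := rfl
lemma w13_ff (i j : ℕ) : w13 (false, false, i, j) = if i = 0 ∧ j = 0 then 1 else 0 := by
  rcases i with _ | i <;> rcases j with _ | j <;> simp [w13]
lemma w13_tt (i j : ℕ) : w13 (true, true, i, j) = if i = 0 ∧ j = 1 then 1 else 0 := by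
  rcases i with _ | i <;> rcases j with _ | _ | j <;> simp [w13]

lemma φ13_Δval (p : Bool × Bool × ℕ × ℕ) : φ13 (Δval13 p) = 0 := by
  obtain ⟨b₁, b₂, i, j⟩ := p
  cases b₁ <;> cases b₂ <;>
    simp only [Δval13, map_add, map_smul, map_zero, φ13_e, w13_tf, w13_ft, w13_ff, w13_tt,
      smul_eq_mul, mul_zero, add_zero, zero_add, mul_ite, mul_one] <;>
    split_ifs <;>
    first
    | rfl
    | decide
    | (simp [CharTwo.add_self_eq_zero]; done)
    | (exfalso; omega)
    | (have hj0 : j = 0 := by omega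
       subst hj0
       simp)

lemma φ13_Δ (x : Sp13) : φ13 (Δ13 x) = 0 := by
  have : Δ13 x = x.sum fun p c => c • Δval13 p := by
    simp [Δ13, Finsupp.lsum_apply, Finsupp.sum, LinearMap.toSpanSingleton_apply]
  rw [this, map_finsuppSum]
  simp [φ13_Δval]

/-- The unit `1` (i.e. the basis monomial `u₋₁⁰u₋₂⁰v₂⁰v₃⁰`) does not belong
to the image of `Δ`. -/
theorem stmt13 : e13 false false 0 0 ∉ Set.range Δ13 := by
  rintro ⟨x, hx⟩
  have h1 : φ13 (e13 false false 0 0) = 1 := by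
    rw [φ13_e]; rfl
  rw [← hx, φ13_Δ] at h1
  exact one_ne_zero h1.symm
end

section
/- There is no isomorphism of Batalin-Vilkovisky algebras between H^{*+3}(LBSO(3);F₂) ≅ Λ(u₋₁,u₋₂) ⊗ F₂[v₂,v₃] (with BV operator as in Theorem 'BV-algebra for SO(3)', where 1 ∉ Im Δ) and the Hochschild cohomology HH*(H_*(SO(3);F₂), H_*(SO(3);F₂)) of the exterior algebra H_*(SO(3);F₂) = Λ(x₋₁,x₋₂) with its Frobenius BV structure (where 1 ∈ Im Δ). -/
/-! **Statement 14.**  There is no isomorphism of Batalin-Vilkovisky algebras between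
`H^{*+3}(LBSO(3);F₂) ≅ Λ(u₋₁,u₋₂) ⊗ F₂[v₂,v₃]` (with its BV operator `ΔL`, for which
`1 ∉ Im ΔL`) and the Hochschild cohomology `HH^*(H_*(SO(3);F₂), H_*(SO(3);F₂))` of the exterior
algebra `H_*(SO(3);F₂) = Λ(x₋₁,x₋₂)` with its Frobenius BV operator `ΔH` (for which
`1 ∈ Im ΔH`, e.g. `ΔH(x₋₂y₃) = 1`).

Both underlying algebras are `A = Λ(a,b) ⊗ F₂[c,d]`, modelled as
`F₂[X₀,X₁,X₂,X₃]/(X₀², X₁²)`, with exterior generators `u₁ (= u₋₁ resp. x₋₁)`,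
`u₂ (= u₋₂ resp. x₋₂)` and polynomial generators `v₂ (= v₂ resp. y₂)`, `v₃ (= v₃ resp. y₃)`.
The BV operators are specified (linearly) on the monomial basis; since the BV identity and all
the defining formulas have no signs mod 2, this pins them down. -/

noncomputable section

abbrev A14 : Type :=
  MvPolynomial (Fin 4) (ZMod 2) ⧸
    Ideal.span {(MvPolynomial.X 0 : MvPolynomial (Fin 4) (ZMod 2)) ^ 2, MvPolynomial.X 1 ^ 2}

def g14 (i : Fin 4) : A14 := Ideal.Quotient.mk _ (MvPolynomial.X i)

/-- `u₋₁` (degree `-1` exterior generator). -/ def u₁ : A14 := g14 0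
/-- `u₋₂` (degree `-2` exterior generator). -/ def u₂ : A14 := g14 1
/-- `v₂` (degree `2` polynomial generator). -/ def w₂ : A14 := g14 2
/-- `v₃` (degree `3` polynomial generator). -/ def w₃ : A14 := g14 3

/-! The linear functional "coefficient of `1` plus coefficient of `u₂w₂`" on the monomial basis
vanishes on the image of the string-topology operator `ΔL`: on every monomial, the terms of `ΔL`
it detects cancel mod 2, e.g. `ΔL(u₁w₂) = 1 + u₂w₂ + u₁u₂w₃`. It takes the value 1 at `1`, so
`1 ∉ Im ΔL`. On the Hochschild side `ΔH(u₂w₃) = 1`, and a unital map `φ` intertwining the two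
operators would give `1 = ΔL(φ(u₂w₃))`. -/

open MvPolynomial

theorem MvPolynomial.coeff_eq_zero_of_mem_ideal_span_monomial {σ R : Type*} [CommSemiring R]
    {s : Set (σ →₀ ℕ)} {x : MvPolynomial σ R}
    (hx : x ∈ Ideal.span ((fun t => monomial t (1 : R)) '' s)) {m : σ →₀ ℕ}
    (hm : ∀ t ∈ s, ¬ t ≤ m) : coeff m x = 0 := by
  by_contra h
  obtain ⟨t, ht, htm⟩ := mem_ideal_span_monomial_image.mp hx m (mem_support_iff.mpr h)
  exact hm t ht htm

theorem Function.Semiconj.one_mem_range {A B : Type*} [One A] [One B] {ΔA : A → A} {ΔB : B → B}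
    {φ : A → B} (hφ : Function.Semiconj φ ΔA ΔB) (hφ1 : φ 1 = 1)
    (h : 1 ∈ Set.range ΔA) : 1 ∈ Set.range ΔB := by
  obtain ⟨x, hx⟩ := h
  exact ⟨φ x, by rw [← hφ, hx, hφ1]⟩

namespace A14

abbrev I : Ideal (MvPolynomial (Fin 4) (ZMod 2)) := Ideal.span {X 0 ^ 2, X 1 ^ 2}

theorem I_eq_span_monomial :
    I = Ideal.span
      ((fun t => monomial t (1 : ZMod 2)) '' {Finsupp.single 0 2, Finsupp.single 1 2}) := by
  simp only [I, Set.image_pair, X_pow_eq_monomial]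

def exponent (a b i j : ℕ) : Fin 4 →₀ ℕ := Finsupp.equivFunOnFinite.symm ![a, b, i, j]

theorem exponent_inj {a b i j a' b' i' j' : ℕ} :
    exponent a b i j = exponent a' b' i' j' ↔ a = a' ∧ b = b' ∧ i = i' ∧ j = j' := by
  simp [exponent, Matrix.vecCons_inj]

theorem exponent_self (d : Fin 4 →₀ ℕ) : exponent (d 0) (d 1) (d 2) (d 3) = d := by
  ext k
  fin_cases k <;> rfl

theorem mk_monomial (a b i j : ℕ) (r : ZMod 2) :
    Ideal.Quotient.mk I (monomial (exponent a b i j) r)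
      = r • (u₁ ^ a * u₂ ^ b * w₂ ^ i * w₃ ^ j) := by
  rw [show monomial (exponent a b i j) r = r • monomial (exponent a b i j) 1 by
      rw [smul_monomial, smul_eq_mul, mul_one],
    ← Ideal.Quotient.mkₐ_eq_mk (ZMod 2), map_smul]
  simp [monomial_eq, Finsupp.prod_fintype, Fin.prod_univ_four, exponent, u₁, u₂, w₂, w₃, g14]

theorem coeff_exponent_eq_zero_of_mem {x : MvPolynomial (Fin 4) (ZMod 2)} (hx : x ∈ I)
    {a b i j : ℕ} (ha : a < 2) (hb : b < 2) : coeff (exponent a b i j) x = 0 := by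
  rw [I_eq_span_monomial] at hx
  refine coeff_eq_zero_of_mem_ideal_span_monomial hx ?_
  simp [Finsupp.single_le_iff, exponent, ha, hb]

def coeffOneAddU₂W₂ : A14 →ₗ[ZMod 2] ZMod 2 :=
  (Submodule.liftQ (I.restrictScalars (ZMod 2))
      (lcoeff (ZMod 2) (exponent 0 0 0 0) + lcoeff (ZMod 2) (exponent 0 1 1 0))
      fun x hx => by
        simp [coeff_exponent_eq_zero_of_mem (Submodule.restrictScalars_mem _ _ _ |>.mp hx)]).comp
    (Submodule.Quotient.restrictScalarsEquiv (ZMod 2) I).symm.toLinearMap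

theorem coeffOneAddU₂W₂_mk (p : MvPolynomial (Fin 4) (ZMod 2)) :
    coeffOneAddU₂W₂ (Ideal.Quotient.mk I p)
      = coeff (exponent 0 0 0 0) p + coeff (exponent 0 1 1 0) p :=
  rfl

theorem coeffOneAddU₂W₂_monomial (a b i j : ℕ) :
    coeffOneAddU₂W₂ (u₁ ^ a * u₂ ^ b * w₂ ^ i * w₃ ^ j)
      = (if a = 0 ∧ b = 0 ∧ i = 0 ∧ j = 0 then 1 else 0)
        + (if a = 0 ∧ b = 1 ∧ i = 1 ∧ j = 0 then 1 else 0) := by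
  rw [← one_smul (ZMod 2) (_ * _), ← mk_monomial, coeffOneAddU₂W₂_mk]
  simp only [coeff_monomial, exponent_inj]

theorem coeffOneAddU₂W₂_w₂_pow_mul_w₃_pow (i j : ℕ) :
    coeffOneAddU₂W₂ (w₂ ^ i * w₃ ^ j) = if i = 0 ∧ j = 0 then 1 else 0 := by
  simpa using coeffOneAddU₂W₂_monomial 0 0 i j

theorem coeffOneAddU₂W₂_u₂_mul (i j : ℕ) :
    coeffOneAddU₂W₂ (u₂ * w₂ ^ i * w₃ ^ j) = if i = 1 ∧ j = 0 then 1 else 0 := by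
  simpa using coeffOneAddU₂W₂_monomial 0 1 i j

theorem coeffOneAddU₂W₂_u₁_mul (i j : ℕ) : coeffOneAddU₂W₂ (u₁ * w₂ ^ i * w₃ ^ j) = 0 := by
  simpa using coeffOneAddU₂W₂_monomial 1 0 i j

theorem coeffOneAddU₂W₂_u₁_mul_u₂_mul (i j : ℕ) :
    coeffOneAddU₂W₂ (u₁ * u₂ * w₂ ^ i * w₃ ^ j) = 0 := by
  simpa using coeffOneAddU₂W₂_monomial 1 1 i j

theorem coeffOneAddU₂W₂_one : coeffOneAddU₂W₂ 1 = 1 := by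
  simpa using coeffOneAddU₂W₂_w₂_pow_mul_w₃_pow 0 0

theorem u₁_sq : u₁ ^ 2 = 0 :=
  (Ideal.Quotient.eq_zero_iff_mem).mpr (Ideal.subset_span (by simp))

theorem u₂_sq : u₂ ^ 2 = 0 :=
  (Ideal.Quotient.eq_zero_iff_mem).mpr (Ideal.subset_span (by simp))

structure IsStringBVOperator (Δ : A14 →ₗ[ZMod 2] A14) : Prop where
  map_w₂_pow_mul_w₃_pow : ∀ i j : ℕ, Δ (w₂ ^ i * w₃ ^ j) = 0
  map_u₁_mul_u₂_mul : ∀ i j : ℕ, Δ (u₁ * u₂ * w₂ ^ i * w₃ ^ j)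
      = (i : ZMod 2) • (u₂ * w₂ ^ (i - 1) * w₃ ^ j)
        + (j : ZMod 2) • (u₁ * w₂ ^ i * w₃ ^ (j - 1))
  map_u₂_mul : ∀ i j : ℕ, Δ (u₂ * w₂ ^ i * w₃ ^ j)
      = (i : ZMod 2) • (u₁ * w₂ ^ (i - 1) * w₃ ^ j)
        + (j : ZMod 2) • (w₂ ^ i * w₃ ^ (j - 1))
        + (j : ZMod 2) • (u₂ * w₂ ^ (i + 1) * w₃ ^ (j - 1))
        + (j : ZMod 2) • (u₁ * u₂ * w₂ ^ i * w₃ ^ j)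
  map_u₁_mul : ∀ i j : ℕ, Δ (u₁ * w₂ ^ i * w₃ ^ j)
      = (i : ZMod 2) • (w₂ ^ (i - 1) * w₃ ^ j)
        + ((i + j : ℕ) : ZMod 2) • (u₂ * w₂ ^ i * w₃ ^ j)
        + (i : ZMod 2) • (u₁ * u₂ * w₂ ^ (i - 1) * w₃ ^ (j + 1))
        + (j : ZMod 2) • (u₁ * w₂ ^ (i + 1) * w₃ ^ (j - 1))

namespace IsStringBVOperator

variable {Δ : A14 →ₗ[ZMod 2] A14}

theorem coeffOneAddU₂W₂_map_monomial (hΔ : IsStringBVOperator Δ) (a b i j : ℕ) :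
    coeffOneAddU₂W₂ (Δ (u₁ ^ a * u₂ ^ b * w₂ ^ i * w₃ ^ j)) = 0 := by
  by_cases hab : 2 ≤ a ∨ 2 ≤ b
  · have : u₁ ^ a * u₂ ^ b * w₂ ^ i * w₃ ^ j = 0 := by
      rcases hab with h | h
      · rw [← Nat.sub_add_cancel h, pow_add, u₁_sq]; simp
      · rw [← Nat.sub_add_cancel h, pow_add, u₂_sq]; simp
    rw [this, map_zero, map_zero]
  push Not at hab
  obtain ⟨ha, hb⟩ := hab
  interval_cases a <;> interval_cases b <;> simp only [pow_zero, pow_one, one_mul, mul_one]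
  · rw [hΔ.map_w₂_pow_mul_w₃_pow, map_zero]
  all_goals simp only [hΔ.map_u₂_mul, hΔ.map_u₁_mul, hΔ.map_u₁_mul_u₂_mul, map_add, map_smul,
    smul_eq_mul, coeffOneAddU₂W₂_w₂_pow_mul_w₃_pow, coeffOneAddU₂W₂_u₂_mul, coeffOneAddU₂W₂_u₁_mul,
    coeffOneAddU₂W₂_u₁_mul_u₂_mul]
  · simp [CharTwo.add_self_eq_zero]
  · rcases i with _ | _ | i
    · simp
    · obtain rfl | hj := eq_or_ne j 0
      · rfl
      · simp [hj]
    · simp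
  · split_ifs with h
    · obtain rfl : i = 2 := by omega
      rfl
    · simp

theorem coeffOneAddU₂W₂_map (hΔ : IsStringBVOperator Δ) (z : A14) :
    coeffOneAddU₂W₂ (Δ z) = 0 := by
  obtain ⟨p, rfl⟩ := Ideal.Quotient.mk_surjective z
  induction p using MvPolynomial.induction_on' with
  | add p q hp hq => rw [map_add, map_add, map_add, hp, hq, add_zero]
  | monomial d r =>
    rw [← exponent_self d, mk_monomial, map_smul, map_smul,
      hΔ.coeffOneAddU₂W₂_map_monomial, smul_zero]

theorem one_notMem_range (hΔ : IsStringBVOperator Δ) : (1 : A14) ∉ Set.range Δ := by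
  rintro ⟨z, hz⟩
  simpa [hz, coeffOneAddU₂W₂_one] using hΔ.coeffOneAddU₂W₂_map z

end IsStringBVOperator

end A14

open A14

theorem stmt14_general (ΔH ΔL : A14 →ₗ[ZMod 2] A14)
    -- the Hochschild (Frobenius) BV operator on HH^*(Λ(x₋₁,x₋₂)): trivial on
    -- `Λ(x₋₁,x₋₂) ⊗ 1` and on `1 ⊗ F₂[y₂,y₃]`, with
    -- `Δ(x₋₂y₃) = Δ(x₋₁y₂) = 1` and `Δ(x₋₂y₂) = Δ(x₋₁y₃) = 0`:
    (hH3 : ΔH (u₂ * w₃) = 1 ∧ ΔH (u₁ * w₂) = 1 ∧ ΔH (u₂ * w₂) = 0 ∧ ΔH (u₁ * w₃) = 0)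
    -- the string-topology BV operator of `H^{*+3}(LBSO(3);F₂)` on the monomial basis:
    (hL1 : ∀ i j : ℕ, ΔL (w₂ ^ i * w₃ ^ j) = 0)
    (hL2 : ∀ i j : ℕ, ΔL (u₁ * u₂ * w₂ ^ i * w₃ ^ j)
      = (i : ZMod 2) • (u₂ * w₂ ^ (i - 1) * w₃ ^ j)
        + (j : ZMod 2) • (u₁ * w₂ ^ i * w₃ ^ (j - 1)))
    (hL3 : ∀ i j : ℕ, ΔL (u₂ * w₂ ^ i * w₃ ^ j)
      = (i : ZMod 2) • (u₁ * w₂ ^ (i - 1) * w₃ ^ j)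
        + (j : ZMod 2) • (w₂ ^ i * w₃ ^ (j - 1))
        + (j : ZMod 2) • (u₂ * w₂ ^ (i + 1) * w₃ ^ (j - 1))
        + (j : ZMod 2) • (u₁ * u₂ * w₂ ^ i * w₃ ^ j))
    (hL4 : ∀ i j : ℕ, ΔL (u₁ * w₂ ^ i * w₃ ^ j)
      = (i : ZMod 2) • (w₂ ^ (i - 1) * w₃ ^ j)
        + ((i + j : ℕ) : ZMod 2) • (u₂ * w₂ ^ i * w₃ ^ j)
        + (i : ZMod 2) • (u₁ * u₂ * w₂ ^ (i - 1) * w₃ ^ (j + 1))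
        + (j : ZMod 2) • (u₁ * w₂ ^ (i + 1) * w₃ ^ (j - 1))) :
    -- there is no BV-algebra isomorphism (algebra isomorphism commuting with the BV operators)
    -- from the Hochschild side to the string-topology side:
    ¬ ∃ φ : A14 ≃ₐ[ZMod 2] A14, ∀ z : A14, φ (ΔH z) = ΔL (φ z) := by
  rintro ⟨φ, hφ⟩
  exact (IsStringBVOperator.mk hL1 hL2 hL3 hL4).one_notMem_range
    (Function.Semiconj.one_mem_range hφ (map_one φ) ⟨_, hH3.1⟩)

theorem stmt14 (ΔH ΔL : A14 →ₗ[ZMod 2] A14)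
    -- the Hochschild (Frobenius) BV operator on HH^*(Λ(x₋₁,x₋₂)): trivial on
    -- `Λ(x₋₁,x₋₂) ⊗ 1` and on `1 ⊗ F₂[y₂,y₃]`, with
    -- `Δ(x₋₂y₃) = Δ(x₋₁y₂) = 1` and `Δ(x₋₂y₂) = Δ(x₋₁y₃) = 0`:
    (hH1 : ∀ i j : ℕ, ΔH (w₂ ^ i * w₃ ^ j) = 0)
    (hH2 : ΔH u₁ = 0 ∧ ΔH u₂ = 0 ∧ ΔH (u₁ * u₂) = 0)
    (hH3 : ΔH (u₂ * w₃) = 1 ∧ ΔH (u₁ * w₂) = 1 ∧ ΔH (u₂ * w₂) = 0 ∧ ΔH (u₁ * w₃) = 0)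
    -- the string-topology BV operator of `H^{*+3}(LBSO(3);F₂)` on the monomial basis:
    (hL1 : ∀ i j : ℕ, ΔL (w₂ ^ i * w₃ ^ j) = 0)
    (hL2 : ∀ i j : ℕ, ΔL (u₁ * u₂ * w₂ ^ i * w₃ ^ j)
      = (i : ZMod 2) • (u₂ * w₂ ^ (i - 1) * w₃ ^ j)
        + (j : ZMod 2) • (u₁ * w₂ ^ i * w₃ ^ (j - 1)))
    (hL3 : ∀ i j : ℕ, ΔL (u₂ * w₂ ^ i * w₃ ^ j)
      = (i : ZMod 2) • (u₁ * w₂ ^ (i - 1) * w₃ ^ j)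
        + (j : ZMod 2) • (w₂ ^ i * w₃ ^ (j - 1))
        + (j : ZMod 2) • (u₂ * w₂ ^ (i + 1) * w₃ ^ (j - 1))
        + (j : ZMod 2) • (u₁ * u₂ * w₂ ^ i * w₃ ^ j))
    (hL4 : ∀ i j : ℕ, ΔL (u₁ * w₂ ^ i * w₃ ^ j)
      = (i : ZMod 2) • (w₂ ^ (i - 1) * w₃ ^ j)
        + ((i + j : ℕ) : ZMod 2) • (u₂ * w₂ ^ i * w₃ ^ j)
        + (i : ZMod 2) • (u₁ * u₂ * w₂ ^ (i - 1) * w₃ ^ (j + 1))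
        + (j : ZMod 2) • (u₁ * w₂ ^ (i + 1) * w₃ ^ (j - 1))) :
    -- there is no BV-algebra isomorphism (algebra isomorphism commuting with the BV operators)
    -- from the Hochschild side to the string-topology side:
    ¬ ∃ φ : A14 ≃ₐ[ZMod 2] A14, ∀ z : A14, φ (ΔH z) = ΔL (φ z) :=
  stmt14_general ΔH ΔL hH3 hL1 hL2 hL3 hL4

end
end

section
/- Over a field F of characteristic p with no top Steenrod operation obstruction (hypothesis H), the explicit product m on Λ(sV) ⊗ F[V] defined by m(sv_{i₁}⋯sv_{i_l}·a ⊗ sv_{j₁}⋯sv_{j_m}·b) = (-1)^{ε'+ε+m+u+lu+Nm} sv_{k₁}⋯sv_{k_u}·ab when {i₁,…,i_l}∪{j₁,…,j_m} = {1,…,N} (with {k₁,…,k_u} the intersection and ε, ε' the signs of the indicated permutations), and 0 otherwise, admits x₁⋯x_N = sv₁⋯sv_N as a two-sided unit. -/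
open Finset

/-! **Statement 15.**  Over a field `F` (hypothesis (H): char `p` odd or `0`, or no top Steenrod
operation), the explicit product `m` on `Λ(sV) ⊗ F[V]` of Theorem `thm:BG_explicit_cal`,
`m(sv_{i₁}⋯sv_{i_l}·a ⊗ sv_{j₁}⋯sv_{j_m}·b) = (-1)^{ε'+ε+m+u+lu+Nm} sv_{k₁}⋯sv_{k_u}·ab`
when `{i₁,…,i_l} ∪ {j₁,…,j_m} = {1,…,N}` (with `{k₁,…,k_u}` the intersection and `ε, ε'` the
signs of the indicated permutations) and `0` otherwise, admits `x₁⋯x_N = sv₁⋯sv_N` as a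
two-sided unit.

We model the underlying vector space of `Λ(sV) ⊗ F[V]` with its monomial decomposition:
an element is a finitely supported function `Finset (Fin N) →₀ F[V]`, the finset `I` recording
the exterior monomial `x_I = sv_{i₁}⋯sv_{i_l}` (indices increasing) and the value its `F[V]`
coefficient.  The sign `ε` of the permutation of `(j₁,…,j_m)` bringing the intersection elements
`k₁,…,k_u` to the front, and the sign `ε'` of the permutation taking
`(i₁,…,i_l, j's with the k's deleted)` to `(1,…,N)`, are computed as `(-1)^{#inversions}`. -/

/-- Number of inversions of a list in a linear order: the parity of the permutation sorting
the list is `(-1)^{inversions l}`. -/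
def inversions {α : Type*} [LinearOrder α] : List α → ℕ
  | [] => 0
  | a :: l => l.countP (fun b => decide (b < a)) + inversions l

/-- The sign exponent `ε' + ε + m + u + l·u + N·m` of Theorem `thm:BG_explicit_cal`, for
exterior monomials `x_I`, `x_J` (`l = |I|`, `m = |J|`, `u = |I ∩ J|`):
`ε = sgn (j₁ … j_m ↦ k₁ … k_u, j's with k's deleted)` and
`ε' = sgn (i₁ … i_l, j's with k's deleted ↦ 1 … N)`. -/
def signExp {N : ℕ} (I J : Finset (Fin N)) : ℕ :=
  inversions ((I ∩ J).sort (· ≤ ·) ++ (J \ (I ∩ J)).sort (· ≤ ·))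
    + inversions (I.sort (· ≤ ·) ++ (J \ (I ∩ J)).sort (· ≤ ·))
    + J.card + (I ∩ J).card + I.card * (I ∩ J).card + N * J.card

/-- The underlying graded vector space of `Λ(sV) ⊗ F[V]`. -/
abbrev LoopSp (F : Type*) [Field F] (N : ℕ) : Type _ :=
  Finset (Fin N) →₀ MvPolynomial (Fin N) F

/-- The product `m` of Theorem `thm:BG_explicit_cal`:
`m(x_I·a ⊗ x_J·b) = (-1)^{ε'+ε+m+u+lu+Nm} x_{I∩J}·(ab)` if `I ∪ J = {1,…,N}`, else `0`. -/
noncomputable def mprod {F : Type*} [Field F] {N : ℕ} (w₁ w₂ : LoopSp F N) : LoopSp F N :=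
  w₁.sum fun I a => w₂.sum fun J b =>
    if I ∪ J = Finset.univ then
      Finsupp.single (I ∩ J) (((-1 : F) ^ signExp I J) • (a * b))
    else 0

lemma inversions_eq_zero_of_sorted {α : Type*} [LinearOrder α] {l : List α}
    (h : l.Pairwise (· ≤ ·)) : inversions l = 0 := by
  induction l with
  | nil => rfl
  | cons a l ih =>
    obtain ⟨h1, h2⟩ := List.pairwise_cons.mp h
    rw [inversions, ih h2, List.countP_eq_zero.mpr, Nat.add_zero]
    intro b hb
    simpa using not_lt.mpr (h1 b hb)

lemma even_signExp_univ_left {N : ℕ} (J : Finset (Fin N)) :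
    Even (signExp Finset.univ J) := by
  unfold signExp
  rw [Finset.univ_inter, Finset.sdiff_self, Finset.sort_empty, List.append_nil,
    List.append_nil, inversions_eq_zero_of_sorted (Finset.pairwise_sort _ _),
    inversions_eq_zero_of_sorted (Finset.pairwise_sort _ _)]
  simp only [Finset.card_univ, Fintype.card_fin]
  have : 0 + 0 + J.card + J.card + N * J.card + N * J.card
      = 2 * (J.card + N * J.card) := by ring
  rw [this]
  exact even_two_mul _

lemma even_signExp_univ_right {N : ℕ} (I : Finset (Fin N)) :
    Even (signExp I Finset.univ) := by
  unfold signExp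
  rw [Finset.inter_univ]
  simp only [Finset.card_univ, Fintype.card_fin]
  have : ∀ a u n : ℕ, a + a + n + u + u * u + n * n
      = 2 * a + u * (u + 1) + n * (n + 1) := by intros; ring
  rw [this]
  exact ((even_two_mul _).add (Nat.even_mul_succ_self _)).add (Nat.even_mul_succ_self _)

lemma neg_one_pow_signExp_univ_left {F : Type*} [Field F] {N : ℕ} (J : Finset (Fin N)) :
    ((-1 : F) ^ signExp Finset.univ J) = 1 :=
  (even_signExp_univ_left J).neg_one_pow

lemma neg_one_pow_signExp_univ_right {F : Type*} [Field F] {N : ℕ} (I : Finset (Fin N)) :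
    ((-1 : F) ^ signExp I Finset.univ) = 1 :=
  (even_signExp_univ_right I).neg_one_pow

/-- `x₁⋯x_N` (the monomial `x_univ` with coefficient `1`) is a two-sided
unit for `m`. -/
theorem stmt15 {F : Type*} [Field F] {N : ℕ} (w : LoopSp F N) :
    mprod (Finsupp.single Finset.univ 1) w = w ∧
    mprod w (Finsupp.single Finset.univ 1) = w := by
  constructor
  · rw [mprod, Finsupp.sum_single_index]
    · have : (fun (J : Finset (Fin N)) (b : MvPolynomial (Fin N) F) =>
          if Finset.univ ∪ J = Finset.univ then
            Finsupp.single (Finset.univ ∩ J) (((-1 : F) ^ signExp Finset.univ J) • ((1 : MvPolynomial (Fin N) F) * b))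
          else 0) = fun (J : Finset (Fin N)) b => Finsupp.single J b := by
        funext J b
        rw [if_pos (by simp), Finset.univ_inter,
          neg_one_pow_signExp_univ_left, one_smul, one_mul]
      rw [this, Finsupp.sum_single]
    · simp [Finsupp.sum]
  · rw [mprod]
    have : (fun (I : Finset (Fin N)) (a : MvPolynomial (Fin N) F) =>
        (Finsupp.single (Finset.univ : Finset (Fin N)) (1 : MvPolynomial (Fin N) F)).sum
          fun J b =>
            if I ∪ J = Finset.univ then
              Finsupp.single (I ∩ J) (((-1 : F) ^ signExp I J) • (a * b))
            else 0) = fun (I : Finset (Fin N)) a => Finsupp.single I a := by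
      funext I a
      rw [Finsupp.sum_single_index]
      · rw [if_pos (by simp), Finset.inter_univ,
          neg_one_pow_signExp_univ_right, one_smul, mul_one]
      · simp
    rw [this, Finsupp.sum_single]
end

section
/- Over F₂, in H*(LBG₂;F₂) ≅ Δ(x₃,x₅,x₆) ⊗ F₂[y₄,y₆,y₇] with relations x₃² = x₆, x₅² = x₃y₇ + y₄x₆, x₆² = x₅y₇ + y₆x₆, and Dlcop determined by the axioms (bilinearity over F₂[y₄,y₆,y₇], the relation Dlcop(a ⊗ x_ib) = x_i Dlcop(a⊗b) + Dlcop(ax_i ⊗ b), Dlcop(x₃x₅x₆ ⊗ 1) = 1, and vanishing Dlcop(x_I ⊗ 1) = 0 for proper subsets I), one has Dlcop(x₃x₅x₆ ⊗ x₅x₆) = x₅x₆ + x₅y₆ + y₄y₇. -/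
/-- Over `F₂`, in
`H^*(LBG₂;F₂) ≅ Δ(x₃,x₅,x₆) ⊗ F₂[y₄,y₆,y₇]` with the relations
`x₃² = x₆`, `x₅² = x₃y₇ + y₄x₆`, `x₆² = x₅y₇ + y₆x₆`, and with `Dlcop = D` determined by the
axioms (additivity, bilinearity over `F₂[y₄,y₆,y₇]`, the relation
`D a (xᵢ·b) = xᵢ·D a b + D (a·xᵢ) b`, `D (x₃x₅x₆) 1 = 1`, and vanishing `D x_I 1 = 0` for
all proper subsets `I ⊊ {3,5,6}`), one has
`D (x₃x₅x₆) (x₅x₆) = x₅x₆ + x₅y₆ + y₄y₇`. -/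
theorem stmt18 {H : Type*} [CommRing H] [Algebra (ZMod 2) H]
    (x3 x5 x6 y4 y6 y7 : H)
    (hx3 : x3 * x3 = x6)
    (hx5 : x5 * x5 = x3 * y7 + y4 * x6)
    (hx6 : x6 * x6 = x5 * y7 + y6 * x6)
    (D : H → H → H)
    (haddl : ∀ a b c : H, D (a + b) c = D a c + D b c)
    (haddr : ∀ a b c : H, D a (b + c) = D a b + D a c)
    (hbill : ∀ c ∈ Algebra.adjoin (ZMod 2) ({y4, y6, y7} : Set H),
      ∀ a b : H, D (c * a) b = c * D a b)
    (hbilr : ∀ c ∈ Algebra.adjoin (ZMod 2) ({y4, y6, y7} : Set H),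
      ∀ a b : H, D a (c * b) = c * D a b)
    (hrel : ∀ t ∈ ({x3, x5, x6} : Set H),
      ∀ a b : H, D a (t * b) = t * D a b + D (a * t) b)
    (hfull : D (x3 * x5 * x6) 1 = 1)
    (h0 : D 1 1 = 0) (h3 : D x3 1 = 0) (h5 : D x5 1 = 0) (h6 : D x6 1 = 0)
    (h35 : D (x3 * x5) 1 = 0) (h36 : D (x3 * x6) 1 = 0) (h56 : D (x5 * x6) 1 = 0) :
    D (x3 * x5 * x6) (x5 * x6) = x5 * x6 + x5 * y6 + y4 * y7 := by

  have m4 : y4 ∈ Algebra.adjoin (ZMod 2) ({y4, y6, y7} : Set H) :=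
    Algebra.subset_adjoin (by simp)
  have m6 : y6 ∈ Algebra.adjoin (ZMod 2) ({y4, y6, y7} : Set H) :=
    Algebra.subset_adjoin (by simp)
  have m7 : y7 ∈ Algebra.adjoin (ZMod 2) ({y4, y6, y7} : Set H) :=
    Algebra.subset_adjoin (by simp)
  have m77 := mul_mem m7 m7
  have m47 := mul_mem m4 m7
  have m67 := mul_mem m6 m7
  have m66 := mul_mem m6 m6
  have m667 := mul_mem m66 m7
  have m677 := mul_mem m67 m7
  have m46 := mul_mem m4 m6
  have m447 : y4 * y6 * y7 ∈ Algebra.adjoin (ZMod 2) ({y4, y6, y7} : Set H) :=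
    mul_mem m46 m7
  have m466 := mul_mem m46 m6
  have t5 : x5 ∈ ({x3, x5, x6} : Set H) := by simp
  have t6 : x6 ∈ ({x3, x5, x6} : Set H) := by simp
  -- ring identities
  have I1 : x3 * x5 * x6 * x6
      = y7 * y7 * x6 + ((y4 * y7) * (x3 * x6) + y6 * (x3 * x5 * x6)) := by
    linear_combination (x3 * x5) * hx6 + (x3 * y7) * hx5 + (y7 * y7) * hx3
  have I2 : x3 * x5 * x6 * x5
      = y7 * y7 * x5 + ((y6 * y7) * x6 + ((y4 * y7) * (x3 * x5) + (y4 * y6) * (x3 * x6))) := by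
    linear_combination x3 * x6 * hx5 + y7 * x6 * hx3 + y7 * hx6 + y4 * x3 * hx6
  have I3 : x3 * x5 * x6 * x5 * x6
      = y7 * y7 * (x5 * x6) + ((y6 * y7 * y7) * x5 + ((y6 * y6 * y7) * x6
        + ((y4 * y7) * (x3 * x5 * x6) + ((y4 * y6 * y7) * (x3 * x5)
        + ((y4 * y6 * y6) * (x3 * x6)))))) := by
    linear_combination x3 * x6 * x6 * hx5 + y7 * x6 * x6 * hx3 + y7 * x6 * hx6
      + y4 * x3 * x6 * hx6 + y6 * y7 * hx6 + y4 * y6 * x3 * hx6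
  have sA : D (x3 * x5 * x6 * x6) 1 = y6 := by
    rw [I1, haddl, haddl, hbill _ m77, hbill _ m47, hbill _ m6, h6, h36, hfull]
    ring
  have sB : D (x3 * x5 * x6) x6 = x6 + y6 := by
    have h := hrel x6 t6 (x3 * x5 * x6) 1
    rw [mul_one, hfull, sA] at h
    rw [h]; ring
  have sC : D (x3 * x5 * x6 * x5) 1 = 0 := by
    rw [I2, haddl, haddl, haddl, hbill _ m77, hbill _ m67, hbill _ m47, hbill _ m46,
      h5, h6, h35, h36]
    ring
  have sD : D (x3 * x5 * x6 * x5 * x6) 1 = y4 * y7 := by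
    rw [I3, haddl, haddl, haddl, haddl, haddl, hbill _ m77, hbill _ m677, hbill _ m667, hbill _ m47, hbill _ m447, hbill _ m466, h56, h5, h6, hfull, h35, h36]
    ring
  have sE : D (x3 * x5 * x6 * x5) x6 = y4 * y7 := by
    have h := hrel x6 t6 (x3 * x5 * x6 * x5) 1
    rw [mul_one, sC, sD] at h
    rw [h]; ring
  have h := hrel x5 t5 (x3 * x5 * x6) x6
  rw [sB, sE] at h
  rw [h]; ring
end
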